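/- arXiv:0710.5571 — 4 statements merged into one kernel-verified Lean document; each statement's English description precedes it below -/
import Mathlib

section
/- If an edge-coloring of the complete graph K_n satisfies d_i(x) ≤ δn for every vertex x and every color i, then the number of copies of K_t whose C(t,2) edges do not all receive distinct colors is at most (5/8)·δ·t^4·C(n,t). -/
open Finset

/-- The set of colors appearing on the edges inside a vertex set `S`. -/
def colorsOn {V C : Type*} [DecidableEq V] [DecidableEq C]
    (c : Sym2 V → C) (S : Finset V) : Finset C :=
  S.offDiag.image fun p => c s(p.1, p.2)

/-- The edges inside `S` receive pairwise distinct colors (a rainbow copy of `K_{|S|}`). -/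
def IsRainbow {V C : Type*} (c : Sym2 V → C) (S : Finset V) : Prop :=
  ∀ a ∈ S, ∀ b ∈ S, ∀ x ∈ S, ∀ y ∈ S,
    a ≠ b → x ≠ y → s(a, b) ≠ s(x, y) → c s(a, b) ≠ c s(x, y)

/-- All edges inside `S` receive the same color (a monochromatic copy of `K_{|S|}`). -/
def IsMonochromatic {V C : Type*} (c : Sym2 V → C) (S : Finset V) : Prop :=
  ∀ a ∈ S, ∀ b ∈ S, ∀ x ∈ S, ∀ y ∈ S, a ≠ b → x ≠ y → c s(a, b) = c s(x, y)

/-- All edges inside `S` receive the color `i`. -/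
def IsMonoInColor {V C : Type*} (c : Sym2 V → C) (i : C) (S : Finset V) : Prop :=
  ∀ a ∈ S, ∀ b ∈ S, a ≠ b → c s(a, b) = i

/-- `colorDeg c i x` is the degree `d_i(x)` of the vertex `x` in color `i`. -/
def colorDeg {V C : Type*} [Fintype V] [DecidableEq V] [DecidableEq C]
    (c : Sym2 V → C) (i : C) (x : V) : ℕ :=
  (univ.filter fun y => y ≠ x ∧ c s(x, y) = i).card

instance {V C : Type*} [DecidableEq V] [DecidableEq C] (c : Sym2 V → C) (S : Finset V) :
    Decidable (IsRainbow c S) := by unfold IsRainbow; infer_instance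

instance {V C : Type*} [DecidableEq V] [DecidableEq C] (c : Sym2 V → C) (S : Finset V) :
    Decidable (IsMonochromatic c S) := by unfold IsMonochromatic; infer_instance

instance {V C : Type*} [DecidableEq V] [DecidableEq C] (c : Sym2 V → C) (i : C) (S : Finset V) :
    Decidable (IsMonoInColor c i S) := by unfold IsMonoInColor; infer_instance

/-- There is a `k`-edge-coloring of `K_n` with no rainbow `K_t` in which every `K_4`
receives at least three colors (the colorings counted by `g(k,t)`). -/
def GoodColoring (k t n : ℕ) : Prop :=
  ∃ c : Sym2 (Fin n) → Fin k,
    (∀ S : Finset (Fin n), S.card = t → ¬ IsRainbow c S) ∧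
    (∀ S : Finset (Fin n), S.card = 4 → 3 ≤ (colorsOn c S).card)

/-! Call an ordered pair of distinct, equally coloured edges, each with an orientation, a witness
(`sameColorPairs`). A non-rainbow `K_t` contains at least `8` witnesses (reorient either edge, or
swap the two). Once the first edge and one endpoint of the second are fixed, the colour-degree
bound leaves at most `δn` choices for the last vertex, so there are at most `δn⁴` witnesses, and
at most `4δn³` of them span only three vertices. A `k`-set of vertices lies in
`C(n-k, t-k) ≤ (t/n)^k C(n,t)` of the `t`-sets, so double counting gives
`8 · #non-rainbow ≤ 4δt³ C(n,t) + δt⁴ C(n,t) ≤ 5δt⁴ C(n,t)`. -/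

theorem Nat.descFactorial_mul_pow_le {t n : ℕ} (htn : t ≤ n) :
    ∀ k, t.descFactorial k * n ^ k ≤ n.descFactorial k * t ^ k
  | 0 => by simp
  | k + 1 => by
    have hstep : (t - k) * n ≤ (n - k) * t :=
      calc (t - k) * n = t * n - k * n := Nat.sub_mul ..
        _ ≤ t * n - k * t := Nat.sub_le_sub_left (Nat.mul_le_mul_left k htn) _
        _ = (n - k) * t := by rw [Nat.sub_mul, Nat.mul_comm n t]
    rw [descFactorial_succ, descFactorial_succ, pow_succ, pow_succ]
    calc (t - k) * t.descFactorial k * (n ^ k * n)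
        = t.descFactorial k * n ^ k * ((t - k) * n) := by ring
      _ ≤ n.descFactorial k * t ^ k * ((n - k) * t) :=
        Nat.mul_le_mul (Nat.descFactorial_mul_pow_le htn k) hstep
      _ = (n - k) * n.descFactorial k * (t ^ k * t) := by ring

theorem Nat.choose_sub_mul_pow_le {n t k : ℕ} (hkn : k ≤ n) (hkt : k ≤ t) :
    (n - k).choose (t - k) * n ^ k ≤ t ^ k * n.choose t := by
  obtain htn | hnt := le_or_gt t n
  · have hchoose :
        n.descFactorial k * (n - k).choose (t - k) = n.choose t * t.descFactorial k := by
      rw [descFactorial_eq_factorial_mul_choose, descFactorial_eq_factorial_mul_choose,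
        Nat.mul_assoc, ← choose_mul hkt]
      ring
    refine Nat.le_of_mul_le_mul_left ?_ (descFactorial_pos.2 (hkt.trans htn))
    calc n.descFactorial k * ((n - k).choose (t - k) * n ^ k)
        = n.choose t * (t.descFactorial k * n ^ k) := by
          rw [← Nat.mul_assoc, hchoose, Nat.mul_assoc]
      _ ≤ n.choose t * (n.descFactorial k * t ^ k) :=
        Nat.mul_le_mul_left _ (descFactorial_mul_pow_le htn k)
      _ = n.descFactorial k * (t ^ k * n.choose t) := by ring
  · rw [choose_eq_zero_of_lt (by omega), Nat.zero_mul]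
    exact Nat.zero_le _

namespace Finset

theorem card_le_card_mul_of_card_fiber_le {α ι : Type*} [Fintype ι] [DecidableEq ι]
    (s : Finset α) (f : α → ι) {D : ℝ} (h : ∀ i, (#{a ∈ s | f a = i} : ℝ) ≤ D) :
    (#s : ℝ) ≤ Fintype.card ι * D := by
  rw [card_eq_sum_card_fiberwise fun a _ => mem_univ (f a), Nat.cast_sum]
  exact (sum_le_card_nsmul _ _ _ fun i _ => h i).trans_eq (by simp)

section Subsets

variable {V : Type*} [DecidableEq V]

theorem mul_card_le_sum_card_filter_subset {ι : Type*} {W : Finset ι} (g : ι → Finset V)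
    {B U : Finset (Finset V)} {m : ℕ} (hB : B ⊆ U)
    (hm : ∀ S ∈ B, m ≤ #{q ∈ W | g q ⊆ S}) :
    m * #B ≤ ∑ q ∈ W, #{S ∈ U | g q ⊆ S} :=
  calc m * #B = ∑ S ∈ B, m := by rw [sum_const, smul_eq_mul, Nat.mul_comm]
    _ ≤ ∑ S ∈ B, #{q ∈ W | g q ⊆ S} := sum_le_sum hm
    _ = ∑ q ∈ W, #{S ∈ B | g q ⊆ S} :=
      sum_card_bipartiteAbove_eq_sum_card_bipartiteBelow fun S q => g q ⊆ S
    _ ≤ ∑ q ∈ W, #{S ∈ U | g q ⊆ S} :=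
      sum_le_sum fun q _ => card_le_card (filter_subset_filter _ hB)

variable [Fintype V]

theorem card_filter_powersetCard_subset_mul_pow_le {Q : Finset V} {k : ℕ} (t : ℕ)
    (hk : k ≤ #Q) :
    #{S ∈ powersetCard t univ | Q ⊆ S} * Fintype.card V ^ k ≤
      t ^ k * (Fintype.card V).choose t := by
  obtain ⟨P, hPQ, hP⟩ := exists_subset_card_eq hk
  have hmono : #{S ∈ powersetCard t univ | Q ⊆ S} ≤ #{S ∈ powersetCard t univ | P ⊆ S} :=
    card_le_card (monotone_filter_right _ fun S _ hQS => hPQ.trans hQS)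
  obtain hkt | htk := le_or_gt k t
  · have hcount := card_filter_powersetCard_subset P univ t (subset_univ P) (hP ▸ hkt)
    rw [hcount, card_univ, hP] at hmono
    exact (Nat.mul_le_mul_right _ hmono).trans
      (Nat.choose_sub_mul_pow_le (hP ▸ card_le_univ P) hkt)
  · have hempty : #{S ∈ powersetCard t univ | P ⊆ S} = 0 := by
      refine card_eq_zero.2 (filter_eq_empty_iff.2 fun S hS hPS => ?_)
      have := card_le_card hPS
      rw [(mem_powersetCard.1 hS).2] at this
      omega
    rw [Nat.eq_zero_of_le_zero (hmono.trans hempty.le), Nat.zero_mul]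
    exact Nat.zero_le _

theorem sum_card_filter_powersetCard_subset_le {ι : Type*} (T : Finset ι) (g : ι → Finset V)
    {k : ℕ} (t : ℕ) (hk : ∀ q ∈ T, k ≤ #(g q)) {m : ℝ} (hm : 0 ≤ m)
    (hT : (#T : ℝ) ≤ m * Fintype.card V ^ k) :
    ∑ q ∈ T, (#{S ∈ powersetCard t univ | g q ⊆ S} : ℝ) ≤
      m * t ^ k * (Fintype.card V).choose t := by
  obtain rfl | ⟨q₀, hq₀⟩ := T.eq_empty_or_nonempty
  · simp only [sum_empty]
    positivity
  have hpos : (0 : ℝ) < Fintype.card V ^ k := by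
    have hkV : k ≤ Fintype.card V := (hk q₀ hq₀).trans (card_le_univ _)
    rcases Nat.eq_zero_or_pos (Fintype.card V) with hV | hV
    · simp [hV, Nat.le_zero.1 (hV ▸ hkV)]
    · positivity
  have hsum : (∑ q ∈ T, #{S ∈ powersetCard t univ | g q ⊆ S}) * Fintype.card V ^ k ≤
      #T * (t ^ k * (Fintype.card V).choose t) := by
    rw [sum_mul, ← smul_eq_mul, ← sum_const]
    exact sum_le_sum fun q hq => card_filter_powersetCard_subset_mul_pow_le t (hk q hq)
  refine le_of_mul_le_mul_right ?_ hpos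
  calc (∑ q ∈ T, (#{S ∈ powersetCard t univ | g q ⊆ S} : ℝ)) * Fintype.card V ^ k
      ≤ #T * (t ^ k * (Fintype.card V).choose t) := by exact_mod_cast hsum
    _ ≤ m * Fintype.card V ^ k * (t ^ k * (Fintype.card V).choose t) := by gcongr
    _ = m * t ^ k * (Fintype.card V).choose t * Fintype.card V ^ k := by ring

end Subsets

end Finset

section Witnesses

variable {V C : Type*} [DecidableEq V]

def endpoints (q : (V × V) × (V × V)) : Finset V := {q.1.1, q.1.2, q.2.1, q.2.2}

theorem card_endpoints_eq_four {a b x y : V} (hab : a ≠ b) (hxy : x ≠ y)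
    (hxa : x ≠ a) (hxb : x ≠ b) (hya : y ≠ a) (hyb : y ≠ b) :
    #(endpoints ((a, b), (x, y))) = 4 := by
  rw [endpoints, card_insert_of_notMem (by simp [hab, Ne.symm hxa, Ne.symm hya]),
    card_insert_of_notMem (by simp [Ne.symm hxb, Ne.symm hyb]), card_pair hxy]

variable [Fintype V] [DecidableEq C]

def sameColorPairs (c : Sym2 V → C) : Finset ((V × V) × (V × V)) :=
  {q : (V × V) × (V × V) | q.1.1 ≠ q.1.2 ∧ q.2.1 ≠ q.2.2 ∧
    s(q.1.1, q.1.2) ≠ s(q.2.1, q.2.2) ∧ c s(q.1.1, q.1.2) = c s(q.2.1, q.2.2)}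

variable {c : Sym2 V → C}

theorem mem_sameColorPairs {a b x y : V} :
    ((a, b), (x, y)) ∈ sameColorPairs c ↔
      a ≠ b ∧ x ≠ y ∧ s(a, b) ≠ s(x, y) ∧ c s(a, b) = c s(x, y) := by
  simp [sameColorPairs]

theorem three_le_card_endpoints {q : (V × V) × (V × V)} (hq : q ∈ sameColorPairs c) :
    3 ≤ #(endpoints q) := by
  obtain ⟨⟨a, b⟩, ⟨x, y⟩⟩ := q
  obtain ⟨hab, hxy, hne, -⟩ := mem_sameColorPairs.1 hq
  refine two_lt_card.2 ?_
  by_cases hx : x = a ∨ x = b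
  · have hy : y ≠ a ∧ y ≠ b := by
      rcases hx with rfl | rfl <;> refine ⟨?_, ?_⟩ <;> rintro rfl
      exacts [hxy rfl, hne rfl, hne Sym2.eq_swap, hxy rfl]
    exact ⟨a, by simp [endpoints], b, by simp [endpoints], y, by simp [endpoints], hab,
      Ne.symm hy.1, Ne.symm hy.2⟩
  · simp only [not_or] at hx
    exact ⟨a, by simp [endpoints], b, by simp [endpoints], x, by simp [endpoints], hab,
      Ne.symm hx.1, Ne.symm hx.2⟩

theorem eight_le_card_sameColorPairs_endpoints_subset {S : Finset V} (hS : ¬IsRainbow c S) :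
    8 ≤ #{q ∈ sameColorPairs c | endpoints q ⊆ S} := by
  simp only [IsRainbow, not_forall, not_not] at hS
  obtain ⟨a, ha, b, hb, x, hx, y, hy, hab, hxy, hne, hcol⟩ := hS
  let A : Finset (V × V) := {(a, b), (b, a)}
  let X : Finset (V × V) := {(x, y), (y, x)}
  have hA : #A = 2 := card_pair (by simp [hab])
  have hX : #X = 2 := card_pair (by simp [hxy])
  have hA' : ∀ p ∈ A, p.1 ∈ S ∧ p.2 ∈ S ∧ p.1 ≠ p.2 ∧ s(p.1, p.2) = s(a, b) := by
    simp [A, ha, hb, hab, Ne.symm hab]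
  have hX' : ∀ p ∈ X, p.1 ∈ S ∧ p.2 ∈ S ∧ p.1 ≠ p.2 ∧ s(p.1, p.2) = s(x, y) := by
    simp [X, hx, hy, hxy, Ne.symm hxy]
  have hAX : Disjoint A X := disjoint_left.2 fun p hpA hpX =>
    hne ((hA' p hpA).2.2.2.symm.trans (hX' p hpX).2.2.2)
  calc 8 = #(A ×ˢ X ∪ X ×ˢ A) := by
        rw [card_union_of_disjoint (disjoint_product.2 (Or.inl hAX)), card_product, card_product,
          hA, hX]
    _ ≤ _ := card_le_card ?_
  have hmem : ∀ {e e' : Sym2 V}, e ≠ e' → c e = c e' → ∀ p p' : V × V,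
      p.1 ∈ S ∧ p.2 ∈ S ∧ p.1 ≠ p.2 ∧ s(p.1, p.2) = e →
      p'.1 ∈ S ∧ p'.2 ∈ S ∧ p'.1 ≠ p'.2 ∧ s(p'.1, p'.2) = e' →
      (p, p') ∈ {q ∈ sameColorPairs c | endpoints q ⊆ S} := by
    rintro e e' hee' hcee' p p' ⟨h1, h2, h3, rfl⟩ ⟨h1', h2', h3', rfl⟩
    simp only [sameColorPairs, endpoints, mem_filter, mem_univ, insert_subset_iff,
      singleton_subset_iff]
    exact ⟨⟨trivial, h3, h3', hee', hcee'⟩, h1, h2, h1', h2'⟩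
  rintro ⟨p, p'⟩ h
  simp only [mem_union, mem_product] at h
  rcases h with ⟨hp, hp'⟩ | ⟨hp, hp'⟩
  · exact hmem hne hcol p p' (hA' p hp) (hX' p' hp')
  · exact hmem (Ne.symm hne) hcol.symm p p' (hX' p hp) (hA' p' hp')

theorem card_sameColorPairs_le {D : ℝ} (hdeg : ∀ x i, (colorDeg c i x : ℝ) ≤ D) :
    (#(sameColorPairs c) : ℝ) ≤ Fintype.card V ^ 3 * D := by
  have hfiber : ∀ i : (V × V) × V,
      (#{q ∈ sameColorPairs c | (q.1, q.2.1) = i} : ℝ) ≤ D := by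
    rintro ⟨⟨a, b⟩, x⟩
    refine le_trans (Nat.cast_le.2 (card_le_card_of_injOn (fun q => q.2.2) ?_ ?_))
      (hdeg x (c s(a, b)))
    · rintro ⟨⟨a', b'⟩, ⟨x', y'⟩⟩ hq
      simp only [mem_coe, mem_filter, mem_sameColorPairs, Prod.mk.injEq] at hq
      obtain ⟨⟨-, hxy, -, hcol⟩, ⟨rfl, rfl⟩, rfl⟩ := hq
      simp [Ne.symm hxy, hcol]
    · rintro ⟨p, ⟨x', y'⟩⟩ hq ⟨p', ⟨x'', y''⟩⟩ hq' (rfl : y' = y'')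
      simp only [mem_coe, mem_filter, Prod.mk.injEq] at hq hq'
      obtain ⟨-, rfl, rfl⟩ := hq
      obtain ⟨-, rfl, rfl⟩ := hq'
      rfl
  refine (card_le_card_mul_of_card_fiber_le _ _ hfiber).trans_eq ?_
  simp [Fintype.card_prod, pow_succ]

theorem card_sameColorPairs_filter_eq_le {D : ℝ} (hdeg : ∀ x i, (colorDeg c i x : ℝ) ≤ D) :
    (#{q ∈ sameColorPairs c | q.2.1 = q.1.1} : ℝ) ≤ Fintype.card V ^ 2 * D := by
  have hfiber : ∀ i : V × V,
      (#{q ∈ {q ∈ sameColorPairs c | q.2.1 = q.1.1} | q.1 = i} : ℝ) ≤ D := by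
    rintro ⟨a, b⟩
    refine le_trans (Nat.cast_le.2 (card_le_card_of_injOn (fun q => q.2.2) ?_ ?_))
      (hdeg a (c s(a, b)))
    · rintro ⟨⟨a', b'⟩, ⟨x', y'⟩⟩ hq
      simp only [mem_coe, mem_filter, mem_sameColorPairs, Prod.mk.injEq] at hq
      obtain ⟨⟨⟨-, hxy, -, hcol⟩, rfl⟩, rfl, rfl⟩ := hq
      simp [Ne.symm hxy, hcol]
    · rintro ⟨p, ⟨x', y'⟩⟩ hq ⟨p', ⟨x'', y''⟩⟩ hq' (rfl : y' = y'')
      simp only [mem_coe, mem_filter] at hq hq'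
      obtain ⟨⟨-, rfl⟩, rfl⟩ := hq
      obtain ⟨⟨-, rfl⟩, rfl⟩ := hq'
      rfl
  refine (card_le_card_mul_of_card_fiber_le _ _ hfiber).trans_eq ?_
  simp [Fintype.card_prod, sq]

theorem card_sameColorPairs_filter_card_endpoints_eq_three_le {D : ℝ}
    (hdeg : ∀ x i, (colorDeg c i x : ℝ) ≤ D) :
    (#{q ∈ sameColorPairs c | #(endpoints q) = 3} : ℝ) ≤ 4 * (Fintype.card V ^ 2 * D) := by
  set P := {q ∈ sameColorPairs c | q.2.1 = q.1.1}
  -- Reorienting the edges moves any shared endpoint to the first slot of both.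
  let σ₁ : (V × V) × (V × V) → (V × V) × (V × V) := Prod.map Prod.swap id
  let σ₂ : (V × V) × (V × V) → (V × V) × (V × V) := Prod.map id Prod.swap
  have hsub : {q ∈ sameColorPairs c | #(endpoints q) = 3} ⊆
      P ∪ P.image σ₁ ∪ P.image σ₂ ∪ P.image (σ₁ ∘ σ₂) := by
    rintro ⟨⟨a, b⟩, ⟨x, y⟩⟩ hq
    simp only [mem_filter, mem_sameColorPairs] at hq
    obtain ⟨⟨hab, hxy, hne, hcol⟩, h3⟩ := hq
    have hshare : x = a ∨ x = b ∨ y = a ∨ y = b := by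
      by_contra! h
      exact absurd (card_endpoints_eq_four hab hxy h.1 h.2.1 h.2.2.1 h.2.2.2) (by omega)
    have hP : ∀ {u v w : V}, u ≠ v → u ≠ w → s(u, v) ≠ s(u, w) →
        c s(u, v) = c s(u, w) →
        ((u, v), (u, w)) ∈ P := fun h₁ h₂ h₃ h₄ =>
      mem_filter.2 ⟨mem_sameColorPairs.2 ⟨h₁, h₂, h₃, h₄⟩, rfl⟩
    simp only [mem_union, mem_image]
    rcases hshare with rfl | rfl | rfl | rfl
    · exact .inl (.inl (.inl (hP hab hxy hne hcol)))
    · rw [Sym2.eq_swap] at hne hcol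
      exact .inl (.inl (.inr ⟨_, hP (Ne.symm hab) hxy hne hcol, rfl⟩))
    · rw [Sym2.eq_swap (a := x)] at hne hcol
      exact .inl (.inr ⟨_, hP hab (Ne.symm hxy) hne hcol, rfl⟩)
    · rw [Sym2.eq_swap (a := x), Sym2.eq_swap (a := a)] at hne hcol
      exact .inr ⟨_, hP (Ne.symm hab) (Ne.symm hxy) hne hcol, rfl⟩
  have hcard : #{q ∈ sameColorPairs c | #(endpoints q) = 3} ≤ 4 * #P := by
    refine (card_le_card hsub).trans ?_
    grw [card_union_le, card_union_le, card_union_le, card_image_le, card_image_le,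
      card_image_le]
    omega
  calc (#{q ∈ sameColorPairs c | #(endpoints q) = 3} : ℝ) ≤ 4 * #P := by exact_mod_cast hcard
    _ ≤ 4 * (Fintype.card V ^ 2 * D) := by grw [card_sameColorPairs_filter_eq_le hdeg]

end Witnesses

/-- **Lemma 2.** If an edge-coloring of `K_n` satisfies `d_i(x) ≤ δ n` for each vertex `x`
and each color `i`, then it has at most `(5/8) δ t⁴ C(n,t)` non-rainbow copies of `K_t`. -/
theorem few_nonrainbow_cliques
    (n t : ℕ) {C : Type*} [DecidableEq C] (c : Sym2 (Fin n) → C)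
    (δ : ℝ) (hδ : 0 < δ)
    (hdeg : ∀ (x : Fin n) (i : C), (colorDeg c i x : ℝ) ≤ δ * n) :
    (((((univ : Finset (Fin n)).powersetCard t).filter
        fun S => ¬ IsRainbow c S).card : ℝ))
      ≤ 5 / 8 * δ * t ^ 4 * (n.choose t) := by
  set W := sameColorPairs c
  have hcount : (8 * #{S ∈ powersetCard t univ | ¬IsRainbow c S} : ℝ) ≤
      ∑ q ∈ W, (#{S ∈ powersetCard t univ | endpoints q ⊆ S} : ℝ) := by
    exact_mod_cast mul_card_le_sum_card_filter_subset endpoints (filter_subset _ _)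
      fun S hS => eight_le_card_sameColorPairs_endpoints_subset (mem_filter.1 hS).2
  set X := fun q : (Fin n × Fin n) × (Fin n × Fin n) =>
    (#{S ∈ powersetCard t univ | endpoints q ⊆ S} : ℝ)
  have hthree : ∑ q ∈ W with #(endpoints q) = 3, X q ≤ 4 * δ * t ^ 3 * n.choose t := by
    simpa only [Fintype.card_fin] using
      sum_card_filter_powersetCard_subset_le {q ∈ W | #(endpoints q) = 3} endpoints t
        (fun q hq => (mem_filter.1 hq).2.ge) (by positivity)
        ((card_sameColorPairs_filter_card_endpoints_eq_three_le hdeg).trans_eq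
          (by rw [Fintype.card_fin]; ring))
  have hfour : ∑ q ∈ W with #(endpoints q) ≠ 3, X q ≤ δ * t ^ 4 * n.choose t := by
    simpa only [Fintype.card_fin] using
      sum_card_filter_powersetCard_subset_le {q ∈ W | #(endpoints q) ≠ 3} endpoints t
        (fun q hq => (three_le_card_endpoints (mem_filter.1 hq).1).lt_of_ne' (mem_filter.1 hq).2)
        hδ.le
        ((Nat.cast_le.2 (card_filter_le _ _)).trans ((card_sameColorPairs_le hdeg).trans_eq
          (by rw [Fintype.card_fin]; ring)))
  have hpow : (t : ℝ) ^ 3 ≤ t ^ 4 := by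
    rcases Nat.eq_zero_or_pos t with rfl | ht
    · simp
    · exact pow_le_pow_right₀ (by exact_mod_cast ht) (by norm_num)
  have hsplit := sum_filter_add_sum_filter_not W (fun q => #(endpoints q) = 3) X
  linarith [mul_le_mul_of_nonneg_left hpow (by positivity : (0 : ℝ) ≤ δ * n.choose t)]
end

section
/- (Dependent random choice.) Let G be a graph with n vertices and let V_1 be a subset of the vertex set with |V_1| = m in which each vertex has degree at least αn in G. Let d and h be positive integers and β a positive real with β ≤ m^(−d/h). Then there is a subset V_2 ⊆ V_1 with |V_2| ≥ α^h · m − 1 such that every d-element subset of V_2 has at least βn common neighbors in G. -/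
/-
Pick `h` vertices `f 0, …, f (h-1)` uniformly at random, with repetition, and let `A` be the set
of vertices of `V₁` adjacent to all of them. A vertex `v` lands in `A` with probability
`(deg v / n)^h ≥ α^h`, so `E|A| ≥ α^h m`; a `d`-set with fewer than `βn` common neighbours
lies in `A` with probability less than `β^h`, so in expectation `A` contains at most
`C(m,d) β^h ≤ m^d β^h ≤ 1` such sets. Some choice therefore has `|A| - #(sparse sets in A) ≥
α^h m - 1`, and deleting one vertex of each sparse set in `A` leaves `V₂`. Expectations are
computed as sums over all `n^h` tuples.
-/

open Finset

theorem sum_card_filter_forall_mem_eq_sum_card_pow {α β : Type*} [Fintype α] [DecidableEq α]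
    (s : Finset β) (N : β → Finset α) (h : ℕ) :
    ∑ f : Fin h → α, #{x ∈ s | ∀ i, f i ∈ N x} = ∑ x ∈ s, #(N x) ^ h := by
  simp_rw [card_filter]
  rw [sum_comm]
  refine sum_congr rfl fun x _ => ?_
  rw [← card_filter, ← Fintype.card_piFinset_const (N x) h]
  congr 1
  ext f
  simp [Fintype.mem_piFinset]

theorem exists_subset_card_le_card_add_forall_not_subset {α : Type*} [DecidableEq α]
    (A : Finset α) (B : Finset (Finset α)) (hB : ∀ D ∈ B, D.Nonempty) :
    ∃ A' ⊆ A, #A ≤ #A' + #B ∧ ∀ D ∈ B, ¬D ⊆ A' := by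
  choose pick hpick using hB
  set S := B.attach.image fun D => pick D.1 D.2
  refine ⟨A \ S, sdiff_subset, ?_, fun D hD hsub => ?_⟩
  · calc #A ≤ #(A \ S) + #S := card_le_card_sdiff_add_card
      _ ≤ #(A \ S) + #B := by grw [card_image_le, card_attach]
  · exact (mem_sdiff.1 (hsub (hpick D hD))).2 (mem_image_of_mem _ (mem_attach B ⟨D, hD⟩))

theorem pow_mul_pow_le_one_of_le_rpow_neg_div {x β : ℝ} {d h : ℕ} (hx : 0 < x) (hβ : 0 ≤ β)
    (hh : h ≠ 0) (hβx : β ≤ x ^ (-(d : ℝ) / h)) : x ^ d * β ^ h ≤ 1 := by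
  have hβh : β ^ h ≤ x ^ (-(d : ℝ)) :=
    calc β ^ h ≤ (x ^ (-(d : ℝ) / h)) ^ h := by gcongr
      _ = x ^ (-(d : ℝ)) := by
        rw [← Real.rpow_natCast, ← Real.rpow_mul hx.le]
        field_simp
  calc x ^ d * β ^ h ≤ x ^ d * x ^ (-(d : ℝ)) := by gcongr
    _ = 1 := by rw [Real.rpow_neg hx.le, Real.rpow_natCast, mul_inv_cancel₀ (by positivity)]

namespace SimpleGraph

variable {V : Type*} [Fintype V] (G : SimpleGraph V) [DecidableRel G.Adj]

def commonNeighborFinset (D : Finset V) : Finset V := {y | ∀ x ∈ D, G.Adj x y}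

variable [DecidableEq V] {s : Finset V} {d h : ℕ} {a b : ℝ}

theorem exists_tuple_card_sub_card_sparse_ge [Nonempty V] (ha : 0 ≤ a) (hb : 0 ≤ b)
    (hdeg : ∀ x ∈ s, a * Fintype.card V ≤ G.degree x) :
    ∃ f : Fin h → V, #s * a ^ h - (#s).choose d * b ^ h ≤
      (#{x ∈ s | ∀ i, f i ∈ G.neighborFinset x} : ℝ) -
        #{D ∈ s.powersetCard d |
          #(G.commonNeighborFinset D) < b * Fintype.card V ∧
            ∀ i, f i ∈ G.commonNeighborFinset D} := by
  set n := Fintype.card V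
  set sparse : Finset (Finset V) := {D ∈ s.powersetCard d | #(G.commonNeighborFinset D) < b * n}
  have hgood : (n : ℝ) ^ h * (#s * a ^ h) ≤
      ∑ f : Fin h → V, (#{x ∈ s | ∀ i, f i ∈ G.neighborFinset x} : ℝ) := by
    have := sum_card_filter_forall_mem_eq_sum_card_pow s (fun x => G.neighborFinset x) h
    simp only [card_neighborFinset_eq_degree] at this
    rw [← Nat.cast_sum, this, Nat.cast_sum]
    calc (n : ℝ) ^ h * (#s * a ^ h) = ∑ _x ∈ s, (a * n) ^ h := by
          rw [sum_const, nsmul_eq_mul]; ring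
      _ ≤ ∑ x ∈ s, ((G.degree x ^ h : ℕ) : ℝ) := by
          push_cast
          gcongr with x hx
          exact hdeg x hx
  have hsparse :
      ∑ f : Fin h → V, (#{D ∈ sparse | ∀ i, f i ∈ G.commonNeighborFinset D} : ℝ) ≤
        (n : ℝ) ^ h * ((#s).choose d * b ^ h) := by
    have := sum_card_filter_forall_mem_eq_sum_card_pow sparse G.commonNeighborFinset h
    rw [← Nat.cast_sum, this, Nat.cast_sum]
    calc ∑ D ∈ sparse, ((#(G.commonNeighborFinset D) ^ h : ℕ) : ℝ)
          ≤ ∑ _D ∈ sparse, (b * n) ^ h := by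
          push_cast
          gcongr with D hD
          exact (mem_filter.1 hD).2.le
      _ ≤ (#s).choose d * (b * n) ^ h := by
          rw [sum_const, nsmul_eq_mul, ← card_powersetCard]
          exact mul_le_mul_of_nonneg_right (by exact_mod_cast card_filter_le _ _) (by positivity)
      _ = (n : ℝ) ^ h * ((#s).choose d * b ^ h) := by ring
  simp only [sparse, filter_filter] at hsparse
  by_contra! hlt
  have hsum := sum_lt_sum_of_nonempty univ_nonempty fun f _ => hlt f
  simp only [sum_const, card_univ, Fintype.card_fun, Fintype.card_fin, nsmul_eq_mul,
    sum_sub_distrib] at hsum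
  push_cast at hsum
  linarith

theorem exists_subset_card_ge_forall_le_card_commonNeighborFinset [Nonempty V] (hd : 0 < d)
    (ha : 0 ≤ a) (hb : 0 ≤ b) (hdeg : ∀ x ∈ s, a * Fintype.card V ≤ G.degree x) :
    ∃ t ⊆ s, #s * a ^ h - (#s).choose d * b ^ h ≤ #t ∧
      ∀ D ⊆ t, #D = d → b * Fintype.card V ≤ #(G.commonNeighborFinset D) := by
  obtain ⟨f, hf⟩ := G.exists_tuple_card_sub_card_sparse_ge (d := d) (h := h) ha hb hdeg
  set A := {x ∈ s | ∀ i, f i ∈ G.neighborFinset x}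
  set sparseInA := {D ∈ s.powersetCard d |
    #(G.commonNeighborFinset D) < b * Fintype.card V ∧ ∀ i, f i ∈ G.commonNeighborFinset D}
  have hne : ∀ D ∈ sparseInA, D.Nonempty := fun D hD =>
    card_pos.1 ((mem_powersetCard.1 (mem_filter.1 hD).1).2 ▸ hd)
  obtain ⟨t, htA, hcard, hfree⟩ :=
    exists_subset_card_le_card_add_forall_not_subset A sparseInA hne
  refine ⟨t, htA.trans (filter_subset _ _), ?_, fun D hDt hDd => ?_⟩
  · have : (#A : ℝ) ≤ #t + #sparseInA := by exact_mod_cast hcard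
    linarith
  · by_contra hlt
    have hDA := hDt.trans htA
    refine hfree D (mem_filter.2 ⟨mem_powersetCard.2 ⟨hDA.trans (filter_subset _ _), hDd⟩,
      not_le.1 hlt, fun i => ?_⟩) hDt
    simp only [commonNeighborFinset, mem_filter, mem_univ, true_and]
    exact fun x hx => (mem_neighborFinset _ _ _).1 ((mem_filter.1 (hDA hx)).2 i)

end SimpleGraph

/-- **Lemma 4 (dependent random choice).** If `G` is a graph on `n` vertices and `V₁` is a
set of `m` vertices each of degree at least `α n`, and `β ≤ m^(-d/h)`, then there is
`V₂ ⊆ V₁` with `|V₂| ≥ αʰ m − 1` such that every `d` vertices of `V₂` have at least `β n`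
common neighbors. -/
theorem dependent_random_choice
    (n m d h : ℕ) (hn : 0 < n) (hm : 0 < m) (hd : 0 < d) (hh : 0 < h)
    (G : SimpleGraph (Fin n)) [DecidableRel G.Adj]
    (α β : ℝ) (hα : 0 < α) (hβ : 0 < β)
    (V₁ : Finset (Fin n)) (hcard : V₁.card = m)
    (hdeg : ∀ x ∈ V₁, α * n ≤ G.degree x)
    (hβm : β ≤ (m : ℝ) ^ (-(d : ℝ) / h)) :
    ∃ V₂ ⊆ V₁, α ^ h * m - 1 ≤ (V₂.card : ℝ) ∧
      ∀ D ⊆ V₂, D.card = d →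
        β * n ≤ ((univ.filter fun y => ∀ x ∈ D, G.Adj x y).card : ℝ) := by
  have : Nonempty (Fin n) := ⟨⟨0, hn⟩⟩
  obtain ⟨V₂, hV₂, hcard₂, hcommon⟩ :=
    G.exists_subset_card_ge_forall_le_card_commonNeighborFinset (s := V₁) (h := h)
      hd hα.le hβ.le (by simpa only [Fintype.card_fin] using hdeg)
  simp only [Fintype.card_fin, hcard] at hcard₂ hcommon
  have hchoose : (m.choose d : ℝ) * β ^ h ≤ 1 :=
    calc (m.choose d : ℝ) * β ^ h ≤ m ^ d * β ^ h := by
          gcongr; exact_mod_cast m.choose_le_pow d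
      _ ≤ 1 := pow_mul_pow_le_one_of_le_rpow_neg_div (by positivity) hβ.le hh.ne' hβm
  refine ⟨V₂, hV₂, by linarith, fun D hD hDd => ?_⟩
  -- the two finsets differ only in their `Decidable` instances
  convert hcommon D hD hDd using 3
  unfold SimpleGraph.commonNeighborFinset
  congr
end

section
/- Let d and k be integers with d ≥ 2 and k ≥ 2. Then every k-edge-coloring of the complete graph K_n with n ≥ d^(12k) that contains no rainbow copy of K_d must contain a monochromatic copy of K_4. -/
open Finset

/-!
A vertex set `W` in which every vertex has fewer than `#W / (2 d⁴)` neighbours of each color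
inside `W` contains a rainbow `K_d`: double counting shows that fewer than `C(#W, d)` of its
`d`-subsets contain a monochromatic cherry (two edges of one color at a common vertex) or a
monochromatic matching (two disjoint edges of one color), and a `d`-set containing neither is
rainbow. So without a rainbow `K_d`, every set of size at least `(2 d⁴)^m` contains a vertex `v₀`
and a color `g₀` with a color neighbourhood of size at least `(2 d⁴)^(m-1)`; iterating inside it
gives vertices `v₀, …, v_m` such that each `v_p` sends the color `g_p` to all later vertices.
As `(2 d⁴)^(2k+1) ≤ d^(12k) ≤ n`, this works for `m = 2k + 1`; then three of `v₀, …, v_{2k}`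
carry the same color, and with `v_m` they span a monochromatic `K₄`. For `d = 2` there is
nothing to prove: every pair is rainbow.
-/

open scoped Nat

theorem card_filter_exists_subset_mul_choose_le {V ι : Type*} [DecidableEq V] (W : Finset V)
    (F : Finset ι) (f : ι → Finset V) {s : ℕ} (hf : ∀ t ∈ F, f t ∈ W.powersetCard s) (d : ℕ) :
    #{S ∈ W.powersetCard d | ∃ t ∈ F, f t ⊆ S} * (#W).choose s ≤
      #F * (#W).choose d * d.choose s := by
  calc #{S ∈ W.powersetCard d | ∃ t ∈ F, f t ⊆ S} * (#W).choose s
      ≤ (∑ t ∈ F, #{S ∈ W.powersetCard d | f t ⊆ S}) * (#W).choose s := by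
        gcongr
        refine (card_le_card fun S hS => ?_).trans card_biUnion_le
        obtain ⟨hS, t, ht, htS⟩ := mem_filter.1 hS
        exact mem_biUnion.2 ⟨t, ht, mem_filter.2 ⟨hS, htS⟩⟩
    _ = ∑ t ∈ F, #{S ∈ W.powersetCard d | f t ⊆ S} * (#W).choose s := sum_mul ..
    _ ≤ ∑ _t ∈ F, (#W).choose d * d.choose s := sum_le_sum fun t ht => ?_
    _ = #F * (#W).choose d * d.choose s := by rw [sum_const, smul_eq_mul, mul_assoc]
  obtain ⟨htW, hts⟩ := mem_powersetCard.1 (hf t ht)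
  by_cases hsd : s ≤ d
  · rw [card_filter_powersetCard_subset _ _ _ htW (hts ▸ hsd), hts, Nat.choose_mul hsd, mul_comm]
  · rw [Nat.choose_eq_zero_of_lt (not_le.1 hsd), mul_zero, Nat.le_zero, mul_eq_zero,
      card_eq_zero, filter_eq_empty_iff]
    exact .inl fun S hS htS => hsd (hts ▸ (mem_powersetCard.1 hS).2 ▸ card_le_card htS)

/-- Divided by `N.choose 3 * N.choose 4`, the left side bounds the expected number of
monochromatic cherries and matchings in a random `d`-subset of an `N`-set in which every color
neighbourhood has at most `D` vertices. -/
theorem mul_choose_add_mul_choose_lt {N d D : ℕ} (hd : 3 ≤ d) (hN : 13 ≤ N)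
    (hD : 2 * d ^ 4 * D < N) :
    D * N ^ 2 * d.choose 3 * N.choose 4 + D * N ^ 3 * d.choose 4 * N.choose 3 <
      N.choose 3 * N.choose 4 := by
  have factorial_mul_choose_le (k : ℕ) : k ! * d.choose k ≤ d ^ k :=
    Nat.descFactorial_eq_factorial_mul_choose d k ▸ Nat.descFactorial_le_pow d k
  have h3 := factorial_mul_choose_le 3
  have h4 := factorial_mul_choose_le 4
  obtain ⟨M, rfl⟩ : ∃ M, N = M + 13 := ⟨N - 13, by omega⟩
  have e3 : 3 ! * (M + 13).choose 3 = (M + 13) * (M + 12) * (M + 11) := by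
    rw [← Nat.descFactorial_eq_factorial_mul_choose]
    simp only [Nat.descFactorial_succ, Nat.reduceSubDiff, Nat.add_one_sub_one, tsub_zero,
      Nat.descFactorial_zero, mul_one]
    ring
  have e4 : 4 ! * (M + 13).choose 4 = (M + 13) * (M + 12) * (M + 11) * (M + 10) := by
    rw [← Nat.descFactorial_eq_factorial_mul_choose]
    simp only [Nat.descFactorial_succ, Nat.reduceSubDiff, Nat.add_one_sub_one, tsub_zero,
      Nat.descFactorial_zero, mul_one]
    ring
  have hE : 6 * (D * d ^ 3) + 1 ≤ M + 13 := by
    have : 3 * d ^ 3 ≤ d ^ 4 := by rw [pow_succ' d 3]; exact Nat.mul_le_mul_right _ hd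
    nlinarith
  have hF : 2 * (D * d ^ 4) + 1 ≤ M + 13 := by linarith
  have hsmall : (M + 13) * (D * d ^ 3) * (M + 10) + (M + 13) ^ 2 * (D * d ^ 4) <
      (M + 12) * (M + 11) * (M + 10) := by
    nlinarith [Nat.mul_le_mul_right ((M + 13) * (M + 10)) hE,
      Nat.mul_le_mul_right ((M + 13) ^ 2) hF, Nat.zero_le (M ^ 3), Nat.zero_le (M ^ 2)]
  refine lt_of_mul_lt_mul_left (a := 3 ! * 4 !) ?_ (Nat.zero_le _)
  calc 3 ! * 4 ! * (D * (M + 13) ^ 2 * d.choose 3 * (M + 13).choose 4 +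
        D * (M + 13) ^ 3 * d.choose 4 * (M + 13).choose 3)
      = D * (M + 13) ^ 2 * (3 ! * d.choose 3) * (4 ! * (M + 13).choose 4) +
        D * (M + 13) ^ 3 * (4 ! * d.choose 4) * (3 ! * (M + 13).choose 3) := by ring
    _ ≤ D * (M + 13) ^ 2 * d ^ 3 * (4 ! * (M + 13).choose 4) +
        D * (M + 13) ^ 3 * d ^ 4 * (3 ! * (M + 13).choose 3) := by gcongr
    _ = (M + 13) * (3 ! * (M + 13).choose 3) *
          ((M + 13) * (D * d ^ 3) * (M + 10) + (M + 13) ^ 2 * (D * d ^ 4)) := by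
        rw [e3, e4]; ring
    _ < (M + 13) * (3 ! * (M + 13).choose 3) * ((M + 12) * (M + 11) * (M + 10)) := by
        refine Nat.mul_lt_mul_of_pos_left hsmall (Nat.mul_pos (by omega) ?_)
        exact Nat.mul_pos (Nat.factorial_pos 3) (Nat.choose_pos (by omega))
    _ = (3 ! * (M + 13).choose 3) * (4 ! * (M + 13).choose 4) := by rw [e4, e3]; ring
    _ = 3 ! * 4 ! * ((M + 13).choose 3 * (M + 13).choose 4) := by ring

section Coloring

variable {V C : Type*} [DecidableEq V] [DecidableEq C] (c : Sym2 V → C) (W : Finset V)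

def colorNeighbors (x : V) (i : C) : Finset V :=
  {y ∈ W | y ≠ x ∧ c s(x, y) = i}

def monoCherries : Finset (V × V × V) :=
  {t ∈ W ×ˢ W ×ˢ W | t.1 ≠ t.2.1 ∧ t.1 ≠ t.2.2 ∧ t.2.1 ≠ t.2.2 ∧
    c s(t.1, t.2.1) = c s(t.1, t.2.2)}

def monoMatchings : Finset (V × V × V × V) :=
  {q ∈ W ×ˢ W ×ˢ W ×ˢ W | q.1 ≠ q.2.1 ∧ q.1 ≠ q.2.2.1 ∧ q.1 ≠ q.2.2.2 ∧ q.2.1 ≠ q.2.2.1 ∧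
    q.2.1 ≠ q.2.2.2 ∧ q.2.2.1 ≠ q.2.2.2 ∧ c s(q.1, q.2.1) = c s(q.2.2.1, q.2.2.2)}

variable {c W}

theorem card_monoCherries_le {D : ℕ} (hD : ∀ x ∈ W, ∀ i, #(colorNeighbors c W x i) ≤ D) :
    #(monoCherries c W) ≤ D * #W ^ 2 := by
  rw [sq, ← card_product]
  refine card_le_mul_card_image_of_maps_to (f := fun t => (t.1, t.2.1)) ?_ D ?_
  · intro t ht
    simp only [monoCherries, mem_filter, mem_product] at ht
    exact mem_product.2 ⟨ht.1.1, ht.1.2.1⟩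
  · rintro ⟨x, y⟩ hxy
    calc #{t ∈ monoCherries c W | (t.1, t.2.1) = (x, y)}
        ≤ #((colorNeighbors c W x (c s(x, y))).image fun z => (x, y, z)) := card_le_card ?_
      _ ≤ D := card_image_le.trans (hD x (mem_product.1 hxy).1 _)
    rintro ⟨x', y', z⟩ hfiber
    obtain ⟨ht, hfib⟩ := mem_filter.1 hfiber
    obtain ⟨rfl, rfl⟩ := Prod.mk.inj hfib
    simp only [monoCherries, mem_filter, mem_product] at ht
    obtain ⟨⟨-, -, hz⟩, -, hxz, -, hcol⟩ := ht
    exact mem_image.2 ⟨z, mem_filter.2 ⟨hz, hxz.symm, hcol.symm⟩, rfl⟩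

theorem card_monoMatchings_le {D : ℕ} (hD : ∀ x ∈ W, ∀ i, #(colorNeighbors c W x i) ≤ D) :
    #(monoMatchings c W) ≤ D * #W ^ 3 := by
  rw [pow_succ, sq, ← card_product, ← card_product]
  refine card_le_mul_card_image_of_maps_to (f := fun q => ((q.1, q.2.1), q.2.2.1)) ?_ D ?_
  · intro q hq
    simp only [monoMatchings, mem_filter, mem_product] at hq
    exact mem_product.2 ⟨mem_product.2 ⟨hq.1.1, hq.1.2.1⟩, hq.1.2.2.1⟩
  · rintro ⟨⟨a, b⟩, x⟩ habx
    calc #{q ∈ monoMatchings c W | ((q.1, q.2.1), q.2.2.1) = ((a, b), x)}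
        ≤ #((colorNeighbors c W x (c s(a, b))).image fun y => (a, b, x, y)) := card_le_card ?_
      _ ≤ D := card_image_le.trans (hD x (mem_product.1 habx).2 _)
    rintro ⟨a', b', x', y⟩ hfiber
    obtain ⟨hq, hfib⟩ := mem_filter.1 hfiber
    simp only [Prod.mk.injEq] at hfib
    obtain ⟨⟨rfl, rfl⟩, rfl⟩ := hfib
    simp only [monoMatchings, mem_filter, mem_product] at hq
    obtain ⟨⟨-, -, -, hy⟩, -, -, -, -, -, hxy, hcol⟩ := hq
    exact mem_image.2 ⟨y, mem_filter.2 ⟨hy, hxy.symm, hcol.symm⟩, rfl⟩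

theorem exists_mono_subset_of_not_isRainbow {S : Finset V} (hSW : S ⊆ W)
    (h : ¬IsRainbow c S) :
    (∃ t ∈ monoCherries c W, {t.1, t.2.1, t.2.2} ⊆ S) ∨
      ∃ q ∈ monoMatchings c W, {q.1, q.2.1, q.2.2.1, q.2.2.2} ⊆ S := by
  have cherry : ∀ x ∈ S, ∀ y ∈ S, ∀ z ∈ S, x ≠ y → x ≠ z → s(x, y) ≠ s(x, z) →
      c s(x, y) = c s(x, z) → ∃ t ∈ monoCherries c W, {t.1, t.2.1, t.2.2} ⊆ S := by
    intro x hx y hy z hz hxy hxz hne hcol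
    refine ⟨(x, y, z), ?_, by simp [insert_subset_iff, *]⟩
    simp only [monoCherries, mem_filter, mem_product]
    exact ⟨⟨hSW hx, hSW hy, hSW hz⟩, hxy, hxz, by rintro rfl; exact hne rfl, hcol⟩
  simp only [IsRainbow, not_forall, not_not] at h
  obtain ⟨a, ha, b, hb, x, hx, y, hy, hab, hxy, hne, hcol⟩ := h
  by_cases hax : a = x
  · subst hax; exact .inl (cherry a ha b hb y hy hab hxy hne hcol)
  by_cases hay : a = y
  · subst hay
    rw [Sym2.eq_swap (a := x)] at hne hcol
    exact .inl (cherry a ha b hb x hx hab hxy.symm hne hcol)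
  by_cases hbx : b = x
  · subst hbx
    rw [Sym2.eq_swap (a := a)] at hne hcol
    exact .inl (cherry b hb a ha y hy (Ne.symm hab) hxy hne hcol)
  by_cases hby : b = y
  · subst hby
    rw [Sym2.eq_swap (a := a), Sym2.eq_swap (a := x)] at hne hcol
    exact .inl (cherry b hb a ha x hx (Ne.symm hab) hxy.symm hne hcol)
  refine .inr ⟨(a, b, x, y), ?_, by simp [insert_subset_iff, *]⟩
  simp only [monoMatchings, mem_filter, mem_product]
  exact ⟨⟨hSW ha, hSW hb, hSW hx, hSW hy⟩, hab, hax, hay, hbx, hby, hxy, hcol⟩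

theorem insert_mem_powersetCard_of_mem_monoCherries {t : V × V × V}
    (ht : t ∈ monoCherries c W) : {t.1, t.2.1, t.2.2} ∈ W.powersetCard 3 := by
  simp only [monoCherries, mem_filter, mem_product] at ht
  obtain ⟨⟨h1, h2, h3⟩, h12, h13, h23, -⟩ := ht
  exact mem_powersetCard.2 ⟨by simp [insert_subset_iff, *],
    card_eq_three.2 ⟨_, _, _, h12, h13, h23, rfl⟩⟩

theorem insert_mem_powersetCard_of_mem_monoMatchings {q : V × V × V × V}
    (hq : q ∈ monoMatchings c W) : {q.1, q.2.1, q.2.2.1, q.2.2.2} ∈ W.powersetCard 4 := by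
  simp only [monoMatchings, mem_filter, mem_product] at hq
  obtain ⟨⟨h1, h2, h3, h4⟩, h12, h13, h14, h23, h24, h34, -⟩ := hq
  exact mem_powersetCard.2 ⟨by simp [insert_subset_iff, *],
    card_eq_four.2 ⟨_, _, _, _, h12, h13, h14, h23, h24, h34, rfl⟩⟩

theorem exists_le_mul_card_colorNeighbors {d : ℕ} (hd : 3 ≤ d) (hdW : d ≤ #W) (hW : 13 ≤ #W)
    (hnr : ∀ S ⊆ W, #S = d → ¬IsRainbow c S) :
    ∃ x ∈ W, ∃ i, #W ≤ 2 * d ^ 4 * #(colorNeighbors c W x i) := by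
  by_contra! hsmall
  set N := #W
  set D := (N - 1) / (2 * d ^ 4)
  have hD : ∀ x ∈ W, ∀ i, #(colorNeighbors c W x i) ≤ D := fun x hx i =>
    (Nat.le_div_iff_mul_le (by positivity)).2 (by have := hsmall x hx i; rw [mul_comm]; omega)
  have hDN : 2 * d ^ 4 * D < N := (Nat.mul_div_le (N - 1) (2 * d ^ 4)).trans_lt (by omega)
  set A3 := {S ∈ W.powersetCard d | ∃ t ∈ monoCherries c W, {t.1, t.2.1, t.2.2} ⊆ S}
  set A4 := {S ∈ W.powersetCard d | ∃ q ∈ monoMatchings c W, {q.1, q.2.1, q.2.2.1, q.2.2.2} ⊆ S}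
  have hcover : N.choose d ≤ #A3 + #A4 := by
    rw [← card_powersetCard]
    refine (card_le_card fun S hS => ?_).trans (card_union_le _ _)
    obtain ⟨hSW, hSd⟩ := mem_powersetCard.1 hS
    rcases exists_mono_subset_of_not_isRainbow hSW (hnr S hSW hSd) with h | h
    · exact mem_union_left _ (mem_filter.2 ⟨hS, h⟩)
    · exact mem_union_right _ (mem_filter.2 ⟨hS, h⟩)
  have h3 := card_filter_exists_subset_mul_choose_le W (monoCherries c W)
    (fun t => {t.1, t.2.1, t.2.2}) (fun _ => insert_mem_powersetCard_of_mem_monoCherries) d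
  have h4 := card_filter_exists_subset_mul_choose_le W (monoMatchings c W)
    (fun q => {q.1, q.2.1, q.2.2.1, q.2.2.2})
    (fun _ => insert_mem_powersetCard_of_mem_monoMatchings) d
  have hcount : N.choose d * (N.choose 3 * N.choose 4) ≤
      N.choose d * (D * N ^ 2 * d.choose 3 * N.choose 4 + D * N ^ 3 * d.choose 4 * N.choose 3) :=
    calc N.choose d * (N.choose 3 * N.choose 4)
        ≤ (#A3 + #A4) * (N.choose 3 * N.choose 4) := by gcongr
      _ = #A3 * N.choose 3 * N.choose 4 + #A4 * N.choose 4 * N.choose 3 := by ring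
      _ ≤ #(monoCherries c W) * N.choose d * d.choose 3 * N.choose 4 +
          #(monoMatchings c W) * N.choose d * d.choose 4 * N.choose 3 := by gcongr
      _ ≤ D * N ^ 2 * N.choose d * d.choose 3 * N.choose 4 +
          D * N ^ 3 * N.choose d * d.choose 4 * N.choose 3 := by
        gcongr
        exacts [card_monoCherries_le hD, card_monoMatchings_le hD]
      _ = _ := by ring
  exact (mul_choose_add_mul_choose_lt hd hW hDN).not_ge
    (Nat.le_of_mul_le_mul_left hcount (Nat.choose_pos hdW))

end Coloring

theorem IsMonoInColor.isMonochromatic {V C : Type*} {c : Sym2 V → C} {i : C} {S : Finset V}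
    (h : IsMonoInColor c i S) : IsMonochromatic c S :=
  fun a ha b hb x hx y hy hab hxy => (h a ha b hb hab).trans (h x hx y hy hxy).symm

section Chain

variable {V C : Type*} (c : Sym2 V → C)

def IsColorChain (m : ℕ) (v : ℕ → V) (g : ℕ → C) : Prop :=
  ∀ p q, p < q → q ≤ m → v p ≠ v q ∧ c s(v p, v q) = g p

variable {c}

theorem exists_isColorChain [DecidableEq V] [DecidableEq C] {d : ℕ} (hd : 3 ≤ d)
    (hnr : ∀ S : Finset V, #S = d → ¬IsRainbow c S) (m : ℕ) :
    ∀ W : Finset V, (2 * d ^ 4) ^ m ≤ #W → ∃ v g, (∀ j ≤ m, v j ∈ W) ∧ IsColorChain c m v g := by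
  induction m with
  | zero =>
    intro W hW
    obtain ⟨x, hx⟩ := card_pos.1 (by simpa using hW)
    exact ⟨fun _ => x, fun _ => c s(x, x), fun _ _ => hx, fun p q hpq hq => by omega⟩
  | succ m ih =>
    intro W hW
    have hd4 : d ≤ d ^ 4 := Nat.le_self_pow (by norm_num) d
    have h81 : 3 ^ 4 ≤ d ^ 4 := Nat.pow_le_pow_left hd 4
    have hW4 : 2 * d ^ 4 ≤ #W := (Nat.le_self_pow (Nat.succ_ne_zero m) _).trans hW
    obtain ⟨x, hx, i, hxi⟩ := exists_le_mul_card_colorNeighbors (W := W) hd (by omega) (by omega)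
      fun S _ => hnr S
    obtain ⟨v, g, hvW, hchain⟩ := ih (colorNeighbors c W x i)
      (Nat.le_of_mul_le_mul_left (by rw [← pow_succ']; exact hW.trans hxi) (by positivity))
    refine ⟨fun | 0 => x | j + 1 => v j, fun | 0 => i | j + 1 => g j, ?_, ?_⟩
    · rintro (_ | j) hj
      · exact hx
      · exact (mem_filter.1 (hvW j (by omega))).1
    · rintro (_ | p) (_ | q) hpq hq
      · omega
      · obtain ⟨-, hqx, hcol⟩ := mem_filter.1 (hvW q (by omega))
        exact ⟨hqx.symm, hcol⟩
      · omega
      · exact hchain p q (by omega) (by omega)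

variable {m : ℕ} {v : ℕ → V} {g : ℕ → C}

theorem IsColorChain.injOn (h : IsColorChain c m v g) : Set.InjOn v (Set.Iic m) := by
  intro p hp q hq hpq
  by_contra hne
  rcases Nat.lt_or_gt_of_ne hne with hlt | hlt
  · exact (h p q hlt hq).1 hpq
  · exact (h q p hlt hp).1 hpq.symm

theorem IsColorChain.isMonoInColor_image [DecidableEq V] (h : IsColorChain c m v g)
    {F : Finset ℕ} {i : C} (hF : ∀ p ∈ F, p < m ∧ g p = i) :
    IsMonoInColor c i ((insert m F).image v) := by
  have hle : ∀ p ∈ insert m F, p ≤ m := by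
    intro p hp
    rcases mem_insert.1 hp with rfl | hp
    exacts [le_rfl, (hF p hp).1.le]
  have forward : ∀ p ∈ insert m F, ∀ q ∈ insert m F, p < q → c s(v p, v q) = i := by
    intro p hp q hq hpq
    have hpF : p ∈ F := (mem_insert.1 hp).resolve_left (by have := hle q hq; omega)
    rw [(h p q hpq (hle q hq)).2, (hF p hpF).2]
  simp only [IsMonoInColor, mem_image]
  rintro _ ⟨p, hp, rfl⟩ _ ⟨q, hq, rfl⟩ hne
  rcases lt_trichotomy p q with hpq | rfl | hqp
  · exact forward p hp q hq hpq
  · exact absurd rfl hne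
  · rw [Sym2.eq_swap]; exact forward q hq p hp hqp

theorem IsColorChain.exists_card_eq_four_isMonochromatic [DecidableEq V] [DecidableEq C]
    [Fintype C] (h : IsColorChain c m v g) (hm : 2 * Fintype.card C < m) :
    ∃ S : Finset V, #S = 4 ∧ IsMonochromatic c S := by
  obtain ⟨i, -, hi⟩ := exists_lt_card_fiber_of_mul_lt_card_of_maps_to (s := range m)
    (t := univ) (f := g) (n := 2) (fun _ _ => mem_univ _) (by simpa [mul_comm] using hm)
  obtain ⟨F, hFsub, hF3⟩ := exists_subset_card_eq hi
  have hF : ∀ p ∈ F, p < m ∧ g p = i := fun p hp => by simpa using hFsub hp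
  refine ⟨(insert m F).image v, ?_, (h.isMonoInColor_image hF).isMonochromatic⟩
  rw [card_image_of_injOn (h.injOn.mono ?_), card_insert_of_notMem fun hm => (hF m hm).1.false,
    hF3]
  intro p hp
  rcases mem_insert.1 hp with rfl | hp
  exacts [Set.mem_Iic.2 le_rfl, Set.mem_Iic.2 (hF p hp).1.le]

end Chain

theorem isRainbow_of_card_le_two {V C : Type*} [DecidableEq V] (c : Sym2 V → C) {S : Finset V}
    (hS : #S ≤ 2) : IsRainbow c S := by
  intro a ha b hb x hx y hy hab hxy hne
  obtain rfl : S = {a, b} := (eq_of_subset_of_card_le (by simp [insert_subset_iff, *])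
    (by rw [card_pair hab]; exact hS)).symm
  simp only [mem_insert, mem_singleton] at hx hy
  exfalso
  rcases hx with rfl | rfl <;> rcases hy with rfl | rfl <;> simp_all [Sym2.eq_swap]

theorem two_mul_pow_four_pow_le {d k : ℕ} (hd : 3 ≤ d) (hk : 2 ≤ k) :
    (2 * d ^ 4) ^ (2 * k + 1) ≤ d ^ (12 * k) := by
  rw [← Nat.pow_le_pow_iff_left (n := 3) (by norm_num)]
  have h8 : 2 ^ 3 ≤ d ^ 2 := (show 2 ^ 3 ≤ 3 ^ 2 by norm_num).trans (Nat.pow_le_pow_left hd 2)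
  calc ((2 * d ^ 4) ^ (2 * k + 1)) ^ 3 = (2 ^ 3 * d ^ 12) ^ (2 * k + 1) := by
        rw [pow_right_comm, mul_pow, ← pow_mul]
    _ ≤ (d ^ 2 * d ^ 12) ^ (2 * k + 1) := by gcongr
    _ = (d ^ 14) ^ (2 * k + 1) := by rw [← pow_add]
    _ ≤ (d ^ 12) ^ (3 * k) := by
        rw [← pow_mul, ← pow_mul]; exact Nat.pow_le_pow_right (by omega) (by omega)
    _ = (d ^ (12 * k)) ^ 3 := by rw [← pow_mul, ← pow_mul, mul_comm 3 k, mul_assoc]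

/-- **Lemma 5.** For integers `d, k ≥ 2`, every `k`-edge-coloring of `K_n` with
`n ≥ d^(12k)` and without a rainbow `K_d` has a monochromatic `K_4`. -/
theorem mono_K4_of_no_rainbow
    (d k n : ℕ) (hd : 2 ≤ d) (hk : 2 ≤ k) (hn : d ^ (12 * k) ≤ n)
    (c : Sym2 (Fin n) → Fin k)
    (hnr : ∀ S : Finset (Fin n), S.card = d → ¬ IsRainbow c S) :
    ∃ S : Finset (Fin n), S.card = 4 ∧ IsMonochromatic c S := by
  obtain rfl | hd3 : d = 2 ∨ 3 ≤ d := by omega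
  · have h2n : 2 ≤ n := (Nat.one_lt_two_pow (by omega)).trans_le hn
    obtain ⟨S, -, hS⟩ := exists_subset_card_eq (s := (univ : Finset (Fin n))) (by simpa using h2n)
    exact absurd (isRainbow_of_card_le_two c hS.le) (hnr S hS)
  · obtain ⟨v, g, -, hchain⟩ := exists_isColorChain hd3 hnr (2 * k + 1) univ
      (by simpa using (two_mul_pow_four_pow_le hd3 hk).trans hn)
    exact hchain.exists_card_eq_four_isMonochromatic (by simp)
end

section
/- For all positive integers k and t with k even and t ≥ 3, M(k,t,3) > 2^(kt/4); that is, there exists a k-edge-coloring of the complete graph on 2^(kt/4) vertices containing no monochromatic copy of K_t and no rainbow triangle. -/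
open Finset

/-!
Erdős's union bound gives a 2-coloring of `K_m`, `m = 2 ^ ⌈t/2⌉`, with no monochromatic `K_t`;
having only two colors, it has no rainbow triangle. The lexicographic product of colorings
(color an edge of `V × W` by `c` on the first coordinates if these differ, by `d` on the second
ones otherwise) preserves both properties: a monochromatic clique of the product projects
injectively onto a monochromatic clique of one factor, and in a triangle whose first
coordinates are neither all equal nor all distinct, the two edges leaving the pair with equal
first coordinate get the same color. The product of `k/2` copies of the Erdős coloring is a
`k`-coloring of `K_n`, `n = m ^ (k/2) ≥ 2 ^ (kt/4)`.
-/

open Function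

section Colorings

variable {V W C D : Type*}

def MonoCliqueFree (c : Sym2 V → C) (t : ℕ) : Prop :=
  ∀ S : Finset V, #S = t → ¬ IsMonochromatic c S

/-- Gallai colorings (no rainbow triangle), phrased on vertex triples. -/
def IsGallai (c : Sym2 V → C) : Prop :=
  ∀ ⦃x y z : V⦄, x ≠ y → x ≠ z → y ≠ z →
    c s(x, y) = c s(x, z) ∨ c s(x, y) = c s(y, z) ∨ c s(x, z) = c s(y, z)

lemma IsGallai.not_isRainbow [DecidableEq V] {c : Sym2 V → C} (hc : IsGallai c)
    {S : Finset V} (hS : #S = 3) : ¬ IsRainbow c S := by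
  obtain ⟨x, y, z, hxy, hxz, hyz, rfl⟩ := card_eq_three.1 hS
  intro h
  rcases hc hxy hxz hyz with e | e | e
  · exact h x (by simp) y (by simp) x (by simp) z (by simp) hxy hxz
      (by simp [hxz, hyz, hxy.symm]) e
  · exact h x (by simp) y (by simp) y (by simp) z (by simp) hxy hyz (by simp [hxy, hxz]) e
  · exact h x (by simp) z (by simp) y (by simp) z (by simp) hxz hyz
      (by simp [hxy, hxz, hyz.symm]) e

lemma isGallai_of_fin_two (c : Sym2 V → Fin 2) : IsGallai c := by
  intro x y z _ _ _
  generalize c s(x, y) = a, c s(x, z) = b, c s(y, z) = d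
  revert a b d
  decide

lemma IsMonochromatic.exists_isMonoInColor {c : Sym2 V → C} {S : Finset V}
    (h : IsMonochromatic c S) (hS : 1 < #S) : ∃ γ, IsMonoInColor c γ S := by
  obtain ⟨a, ha, b, hb, hab⟩ := one_lt_card.1 hS
  exact ⟨c s(a, b), fun x hx y hy hxy => h x hx y hy a ha b hb hxy hab⟩

lemma MonoCliqueFree.not_isMonochromatic_of_factor [DecidableEq V] {c : Sym2 V → C} {t : ℕ}
    (hc : MonoCliqueFree c t) {c' : Sym2 W → D} {S : Finset W} (hS : #S = t) {g : W → V}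
    {φ : C → D} (hφ : Injective φ)
    (hg : ∀ a ∈ S, ∀ b ∈ S, a ≠ b → g a ≠ g b ∧ c' s(a, b) = φ (c s(g a, g b))) :
    ¬ IsMonochromatic c' S := by
  intro h
  have hinj : Set.InjOn g S := fun a ha b hb hab => by_contra fun hne => (hg a ha b hb hne).1 hab
  refine hc (S.image g) (by rw [card_image_of_injOn hinj, hS]) ?_
  simp only [IsMonochromatic, forall_mem_image]
  intro a ha b hb x hx y hy hab hxy
  have hab' := ne_of_apply_ne g hab
  have hxy' := ne_of_apply_ne g hxy
  apply hφ
  rw [← (hg a ha b hb hab').2, ← (hg x hx y hy hxy').2]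
  exact h a ha b hb x hx y hy hab' hxy'

lemma IsGallai.comap {c : Sym2 V → C} (hc : IsGallai c) {e : W → V} (he : Injective e)
    (φ : C → D) : IsGallai fun s => φ (c (s.map e)) := by
  intro x y z hxy hxz hyz
  simp only [Sym2.map_mk]
  exact (hc (he.ne hxy) (he.ne hxz) (he.ne hyz)).imp (congrArg φ)
    (Or.imp (congrArg φ) (congrArg φ))

lemma MonoCliqueFree.comap [DecidableEq V] {c : Sym2 V → C} {t : ℕ} (hc : MonoCliqueFree c t)
    {e : W → V} (he : Injective e) {φ : C → D} (hφ : Injective φ) :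
    MonoCliqueFree (fun s => φ (c (s.map e))) t := fun _ hS =>
  hc.not_isMonochromatic_of_factor hS hφ fun _ _ _ _ hab => ⟨he.ne hab, rfl⟩

end Colorings

section LexProduct

variable {V W C D : Type*} [DecidableEq V]

def lexColoring (c : Sym2 V → C) (d : Sym2 W → D) : Sym2 (V × W) → C ⊕ D :=
  Sym2.lift ⟨fun x y => if x.1 = y.1 then .inr (d s(x.2, y.2)) else .inl (c s(x.1, y.1)),
    fun x y => by simp only [eq_comm (a := x.1), Sym2.eq_swap]⟩

variable {c : Sym2 V → C} {d : Sym2 W → D}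

lemma lexColoring_mk (x y : V × W) : lexColoring c d s(x, y) =
    if x.1 = y.1 then .inr (d s(x.2, y.2)) else .inl (c s(x.1, y.1)) := rfl

lemma IsGallai.lexColoring (hc : IsGallai c) (hd : IsGallai d) : IsGallai (lexColoring c d) := by
  intro x y z hxy hxz hyz
  simp only [lexColoring_mk]
  rcases eq_or_ne x.1 y.1 with h₁ | h₁ <;> rcases eq_or_ne x.1 z.1 with h₂ | h₂
  · have h₃ : y.1 = z.1 := h₁ ▸ h₂
    simp only [if_pos h₁, if_pos h₂, if_pos h₃, Sum.inr.injEq]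
    exact hd (fun h => hxy (Prod.ext h₁ h)) (fun h => hxz (Prod.ext h₂ h))
      (fun h => hyz (Prod.ext h₃ h))
  · have h₃ : y.1 ≠ z.1 := h₁ ▸ h₂
    right; right
    rw [if_neg h₂, if_neg h₃, h₁]
  · have h₃ : y.1 ≠ z.1 := h₂ ▸ h₁.symm
    right; left
    rw [if_neg h₁, if_neg h₃, h₂, Sym2.eq_swap]
  · rcases eq_or_ne y.1 z.1 with h₃ | h₃
    · left
      rw [if_neg h₁, if_neg h₂, h₃]
    · simp only [if_neg h₁, if_neg h₂, if_neg h₃, Sum.inl.injEq]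
      exact hc h₁ h₂ h₃

lemma MonoCliqueFree.lexColoring [DecidableEq W] {t : ℕ} (hc : MonoCliqueFree c t)
    (hd : MonoCliqueFree d t) (ht : 2 ≤ t) : MonoCliqueFree (lexColoring c d) t := by
  intro S hS hmono
  obtain ⟨γ | γ, hγ⟩ := hmono.exists_isMonoInColor (by omega)
  · refine hc.not_isMonochromatic_of_factor (g := Prod.fst) hS Sum.inl_injective
      (fun a ha b hb hab => ?_) hmono
    have h := hγ a ha b hb hab
    rw [lexColoring_mk] at h ⊢
    split_ifs at h ⊢ with h₁
    exact ⟨h₁, rfl⟩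
  · refine hd.not_isMonochromatic_of_factor (g := Prod.snd) hS Sum.inr_injective
      (fun a ha b hb hab => ?_) hmono
    have h := hγ a ha b hb hab
    rw [lexColoring_mk] at h ⊢
    split_ifs at h ⊢ with h₁
    exact ⟨fun h₂ => hab (Prod.ext h₁ h₂), rfl⟩

end LexProduct

theorem exists_isGallai_monoCliqueFree_pow {m r t : ℕ} {f : Sym2 (Fin m) → Fin r}
    (hfG : IsGallai f) (hfM : MonoCliqueFree f t) (ht : 2 ≤ t) {q : ℕ} (hq : 1 ≤ q) :
    ∃ c : Sym2 (Fin (m ^ q)) → Fin (r * q), IsGallai c ∧ MonoCliqueFree c t := by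
  induction q, hq using Nat.le_induction with
  | base =>
    have he := (finCongr (pow_one m)).injective
    have hφ := (finCongr (mul_one r).symm).injective
    exact ⟨_, hfG.comap he _, hfM.comap he hφ⟩
  | succ q _ ih =>
    obtain ⟨c, hcG, hcM⟩ := ih
    have he := ((finCongr (pow_succ m q)).trans finProdFinEquiv.symm).injective
    have hφ := (finSumFinEquiv.trans (finCongr (mul_add_one r q).symm)).injective
    exact ⟨_, (hcG.lexColoring hfG).comap he _, (hcM.lexColoring hfM ht).comap he hφ⟩

section Counting

variable {V C : Type*} [Fintype V] [DecidableEq V] [Fintype C] [DecidableEq C]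

lemma card_isMonochromatic_mul_le {S : Finset V} (hS : 2 ≤ #S) :
    #{c : Sym2 V → C | IsMonochromatic c S} * Fintype.card C ^ (#S).choose 2 ≤
      Fintype.card C * Fintype.card C ^ Fintype.card (Sym2 V) := by
  set A := S.offDiag.image Sym2.mk.uncurry
  set B := ({c : Sym2 V → C | IsMonochromatic c S} : Finset _)
  obtain ⟨a, ha, b, hb, hab⟩ := one_lt_card.1 hS
  have hconst : ∀ c ∈ B, ∀ e ∈ A, c e = c s(a, b) := by
    intro c hc e he
    obtain ⟨⟨x, y⟩, hxy, rfl⟩ := mem_image.1 he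
    rw [mem_offDiag] at hxy
    exact (mem_filter.1 hc).2 x hxy.1 y hxy.2.1 a ha b hb hxy.2.2 hab
  -- a coloring monochromatic on `S` is its value on `s(a, b)` together with its values off `A`
  have hinj : Injective fun p : B × (A → C) =>
      (p.1.1 s(a, b), fun e => if h : e ∈ A then p.2 ⟨e, h⟩ else p.1.1 e) := by
    rintro ⟨⟨c, hc⟩, g⟩ ⟨⟨c', hc'⟩, g'⟩ h
    simp only [Prod.mk.injEq] at h
    obtain ⟨h₁, h₂⟩ := h
    have hg : g = g' := funext fun e => by simpa [e.2] using congrFun h₂ e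
    have hc : c = c' := funext fun e => by
      by_cases he : e ∈ A
      · rw [hconst c hc e he, hconst c' hc' e he, h₁]
      · simpa [he] using congrFun h₂ e
    subst hg hc
    rfl
  have := Fintype.card_le_of_injective _ hinj
  rwa [Fintype.card_prod, Fintype.card_prod, Fintype.card_fun, Fintype.card_fun,
    Fintype.card_coe, Fintype.card_coe, Sym2.card_image_offDiag] at this

theorem exists_monoCliqueFree_of_card_mul_choose_lt {t : ℕ} (ht : 2 ≤ t)
    (h : Fintype.card C * (Fintype.card V).choose t < Fintype.card C ^ t.choose 2) :
    ∃ c : Sym2 V → C, MonoCliqueFree c t := by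
  by_contra! hbad
  simp only [MonoCliqueFree, not_forall, not_not] at hbad
  set N := Fintype.card C
  set E := Fintype.card (Sym2 V)
  have hcover : (univ : Finset (Sym2 V → C)) ⊆
      (powersetCard t univ).biUnion fun S => {c | IsMonochromatic c S} := by
    intro c _
    obtain ⟨S, hS, hmono⟩ := hbad c
    exact mem_biUnion.2 ⟨S, mem_powersetCard_univ.2 hS, mem_filter.2 ⟨mem_univ _, hmono⟩⟩
  have : N ^ E * N ^ t.choose 2 ≤ (Fintype.card V).choose t * (N * N ^ E) := calc
    N ^ E * N ^ t.choose 2 = #(univ : Finset (Sym2 V → C)) * N ^ t.choose 2 := by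
      simp [N, E]
    _ ≤ (∑ S ∈ powersetCard t univ, #{c : Sym2 V → C | IsMonochromatic c S}) *
        N ^ t.choose 2 :=
      Nat.mul_le_mul_right _ ((card_le_card hcover).trans card_biUnion_le)
    _ ≤ ∑ _S ∈ powersetCard t (univ : Finset V), N * N ^ E := by
      rw [sum_mul]
      refine sum_le_sum fun S hS => ?_
      have hS := (mem_powersetCard_univ.1 hS)
      simpa [hS] using card_isMonochromatic_mul_le (C := C) (hS ▸ ht : 2 ≤ #S)
    _ = (Fintype.card V).choose t * (N * N ^ E) := by simp
  have hN : N ≠ 0 := by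
    rintro hN
    simp [hN, (Nat.choose_pos ht).ne'] at h
  have hpos : 0 < N ^ E := by positivity
  nlinarith [Nat.mul_lt_mul_of_pos_right h hpos]

end Counting

section ErdosBound

open Nat

lemma two_pow_succ_lt_factorial {t : ℕ} (ht : 6 ≤ t) : 2 ^ (t + 1) < t ! := by
  induction t, ht using Nat.le_induction with
  | base => decide
  | succ t ht ih =>
    calc 2 ^ (t + 1 + 1) = 2 * 2 ^ (t + 1) := by ring
      _ < 2 * t ! := by omega
      _ ≤ (t + 1) * t ! := Nat.mul_le_mul_right _ (by omega)
      _ = (t + 1)! := (factorial_succ t).symm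

lemma two_mul_choose_lt_two_pow_choose_two {t : ℕ} (ht : 4 ≤ t) :
    2 * (2 ^ ((t + 1) / 2)).choose t < 2 ^ t.choose 2 := by
  obtain ht₆ | ht₆ := lt_or_ge t 6
  · interval_cases t <;> decide
  set r := (t + 1) / 2
  have hexp : r * t ≤ t.choose 2 + t := by
    have h2r : 2 * r * t ≤ (t + 1) * t := Nat.mul_le_mul_right t (by omega)
    have hT : 2 * t.choose 2 = t * (t - 1) := by
      rw [choose_two_right, Nat.mul_div_cancel' (even_mul_pred_self t).two_dvd]
    obtain ⟨s, rfl⟩ : ∃ s, t = s + 1 := ⟨t - 1, by omega⟩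
    simp only [add_tsub_cancel_right] at hT
    nlinarith
  refine Nat.lt_of_mul_lt_mul_right (a := t !) ?_
  calc 2 * (2 ^ r).choose t * t ! = 2 * (2 ^ r).descFactorial t := by
        rw [mul_assoc, descFactorial_eq_factorial_mul_choose, mul_comm (t !)]
    _ ≤ 2 * (2 ^ r) ^ t := Nat.mul_le_mul_left 2 (descFactorial_le_pow _ t)
    _ = 2 ^ (r * t + 1) := by rw [← pow_mul, pow_succ, mul_comm]
    _ ≤ 2 ^ (t.choose 2 + (t + 1)) := Nat.pow_le_pow_right two_pos (by omega)
    _ < 2 ^ t.choose 2 * t ! := by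
      rw [pow_add]
      exact Nat.mul_lt_mul_of_pos_left (two_pow_succ_lt_factorial ht₆) (by positivity)

theorem exists_monoCliqueFree_two_coloring {t : ℕ} (ht : 3 ≤ t) :
    ∃ c : Sym2 (Fin (2 ^ ((t + 1) / 2))) → Fin 2, MonoCliqueFree c t := by
  obtain rfl | ht := eq_or_lt_of_le ht
  · -- color a 4-cycle of `K_4` with 0 and the complementary perfect matching with 1
    exact ⟨fun e => if e = s(0, 2) ∨ e = s(1, 3) then 1 else 0, by
      unfold MonoCliqueFree; decide⟩
  · exact exists_monoCliqueFree_of_card_mul_choose_lt (by omega)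
      (by simpa using two_mul_choose_lt_two_pow_choose_two ht)

end ErdosBound

/-- **Lemma 9.** For positive integers `k, t` with `k` even and `t ≥ 3`,
`M(k,t,3) > 2^(kt/4)`: there is a `k`-edge-coloring of a complete graph on at least
`2^(kt/4)` vertices with no monochromatic `K_t` and no rainbow triangle. -/
theorem M_lower_bound
    (k t : ℕ) (hk : 0 < k) (hke : Even k) (ht : 3 ≤ t) :
    ∃ n : ℕ, (2 : ℝ) ^ ((k * t : ℝ) / 4) ≤ (n : ℝ) ∧
      ∃ c : Sym2 (Fin n) → Fin k,
        (∀ S : Finset (Fin n), S.card = t → ¬ IsMonochromatic c S) ∧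
        (∀ S : Finset (Fin n), S.card = 3 → ¬ IsRainbow c S) := by
  obtain ⟨q, rfl⟩ := hke.two_dvd
  obtain ⟨f, hf⟩ := exists_monoCliqueFree_two_coloring ht
  obtain ⟨c, hcG, hcM⟩ :=
    exists_isGallai_monoCliqueFree_pow (isGallai_of_fin_two f) hf (by omega) (q := q) (by omega)
  refine ⟨_, ?_, c, hcM, fun S hS => hcG.not_isRainbow hS⟩
  have hr : (t : ℝ) ≤ 2 * ((t + 1) / 2 : ℕ) := by
    exact_mod_cast (by omega : t ≤ 2 * ((t + 1) / 2))
  rw [Nat.cast_pow, Nat.cast_pow, ← pow_mul, ← Real.rpow_natCast]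
  refine Real.rpow_le_rpow_of_exponent_le one_le_two ?_
  push_cast
  nlinarith
end
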